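/- Let m be a lawful monad equipped with operations gT : m σ and sT : σ → m PUnit satisfying (GG): (do let x ← gT; let y ← gT; pure (x, y)) = (do let x ← gT; pure (x, x)); (GS): (do let x ← gT; sT x) = pure ⟨⟩; and (SG): for all x : σ, (do sT x; gT) = (do sT x; pure x). Define conc : m α → StateT σ m α by conc n = fun s => do let a ← n; let s' ← gT; pure (a, s'), and abs : StateT σ m α → m α by abs t = do let s ← gT; let (a, s') ← t s; sT s'; pure a. Then there is a data refinement from m to StateT σ m: (i) conc distributes over bind, i.e. conc (n >>= k) = conc n >>= fun a => conc (k a) for all n : m α and k : α → m β; and (ii) abs is a left inverse of conc, i.e. abs (conc n) = n for all n : m α. -/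

import Mathlib

universe u v

def concM {m : Type u → Type v} [Monad m] {σ α : Type u} (gT : m σ) (n : m α) :
    StateT σ m α :=
  fun _s => do
    let a ← n
    let s' ← gT
    pure (a, s')

def absM {m : Type u → Type v} [Monad m] {σ α : Type u} (gT : m σ) (sT : σ → m PUnit)
    (t : StateT σ m α) : m α := do
  let s ← gT
  let (a, s') ← t.run s
  sT s'
  pure a

/-! The laws (GG) and (GS) make `gT` discardable: `gT` equals `gT` followed by writing back what
it read, so running it and ignoring the result is the same as `gT >>= sT`, i.e. `pure ⟨⟩`.
Once `gT` is discardable, `concM` ignores the incoming state, so the final read of `concM n`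
can be dropped before `concM (k a)` reads again; and in `absM (concM n)` the initial read
disappears while the final read-then-write is `gT >>= sT = pure ⟨⟩`. -/

def Discardable {m : Type u → Type v} [Monad m] {α : Type u} (x : m α) : Prop :=
  ∀ {β : Type u} (r : m β), x >>= (fun _ => r) = r

section

variable {m : Type u → Type v} [Monad m] [LawfulMonad m] {σ : Type u}
  (gT : m σ) (sT : σ → m PUnit)

theorem bind_set_pure_eq_get
    (hGG : (do let x ← gT; let y ← gT; pure (x, y)) =
           ((do let x ← gT; pure (x, x)) : m (σ × σ)))
    (hGS : (do let x ← gT; sT x) = (pure PUnit.unit : m PUnit)) :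
    (gT >>= fun x => sT x >>= fun _ => pure x) = gT := by
  have hGG' := congrArg (fun t : m (σ × σ) => t >>= fun p => sT p.2 >>= fun _ => pure p.1) hGG
  simp only [bind_assoc, pure_bind] at hGG'
  calc (gT >>= fun x => sT x >>= fun _ => pure x)
      = gT >>= fun x => gT >>= fun y => sT y >>= fun _ => pure x := hGG'.symm
    _ = gT >>= fun x => (gT >>= fun y => sT y) >>= fun _ => pure x := by simp only [bind_assoc]
    _ = gT := by simp only [hGS, pure_bind, bind_pure]

theorem discardable_of_get_get_of_get_set
    (hGG : (do let x ← gT; let y ← gT; pure (x, y)) =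
           ((do let x ← gT; pure (x, x)) : m (σ × σ)))
    (hGS : (do let x ← gT; sT x) = (pure PUnit.unit : m PUnit)) :
    Discardable gT := by
  intro β r
  calc gT >>= (fun _ => r)
      = (gT >>= fun x => sT x >>= fun _ => pure x) >>= fun _ => r := by
        rw [bind_set_pure_eq_get gT sT hGG hGS]
    _ = (gT >>= fun x => sT x) >>= fun _ => r := by simp only [bind_assoc, pure_bind]
    _ = r := by rw [hGS, pure_bind]

variable {gT}

theorem concM_bind (hgT : Discardable gT) {α β : Type u} (n : m α) (k : α → m β) :
    concM gT (n >>= k) = concM gT n >>= fun a => concM gT (k a) := by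
  funext s
  show (n >>= k) >>= (fun b => gT >>= fun s' => pure (b, s')) =
    concM gT n s >>= fun p => concM gT (k p.1) p.2
  simp only [concM, bind_assoc, pure_bind]
  congr 1
  funext a
  rw [hgT]

theorem absM_concM (hgT : Discardable gT)
    (hGS : (do let x ← gT; sT x) = (pure PUnit.unit : m PUnit)) {α : Type u} (n : m α) :
    absM gT sT (concM gT n) = n := by
  show (gT >>= fun _ => (n >>= fun a => gT >>= fun s' => pure (a, s')) >>= fun p =>
      sT p.2 >>= fun _ => pure p.1) = n
  rw [hgT]
  calc (n >>= fun a => gT >>= fun s' => pure (a, s')) >>= (fun p => sT p.2 >>= fun _ => pure p.1)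
      = n >>= fun a => (gT >>= fun s' => sT s') >>= fun _ => pure a := by
        simp only [bind_assoc, pure_bind]
    _ = n := by simp only [hGS, pure_bind, bind_pure]

end

theorem data_refinement_from_m_to_StateT
    {m : Type u → Type v} [Monad m] [LawfulMonad m] {σ : Type u}
    (gT : m σ) (sT : σ → m PUnit)
    (hGG : (do let x ← gT; let y ← gT; pure (x, y)) =
           ((do let x ← gT; pure (x, x)) : m (σ × σ)))
    (hGS : (do let x ← gT; sT x) = (pure PUnit.unit : m PUnit)) :
    (∀ {α β : Type u} (n : m α) (k : α → m β),
        concM gT (n >>= k) = concM gT n >>= fun a => concM gT (k a)) ∧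
    (∀ {α : Type u} (n : m α), absM gT sT (concM gT n) = n) := by
  have hgT : Discardable gT := discardable_of_get_get_of_get_set gT sT hGG hGS
  exact ⟨concM_bind hgT, absM_concM sT hgT hGS⟩
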